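/- Let N ∈ 𝒩 be a face of the complex of k-trees, viewed as a subset of G ⊆ Π^(k)_m such that every antichain in N of size ≥ 2 has a unique minimal upper bound in Π^(k)_m not lying in G. Define Σ(N) as the set of all (unique) joins in Π^(k)_m of subsets of N, ordered by the induced order. Then for every a ∈ Σ(N), a equals the join (in Π_m) of the maximal elements of N below a. -/

import Mathlib

open Classical Set
noncomputable section

/-- The partition of `Fin m` whose only (possibly) non-singleton block is `B`. -/
def blockSetoid {m : ℕ} (B : Set (Fin m)) : Setoid (Fin m) :=
  ⟨fun x y => x = y ∨ (x ∈ B ∧ y ∈ B), by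
    refine ⟨fun x => Or.inl rfl, ?_, ?_⟩
    · rintro x y (h | h)
      · exact Or.inl h.symm
      · exact Or.inr ⟨h.2, h.1⟩
    · rintro x y z (h1 | h1) (h2 | h2)
      · exact Or.inl (h1.trans h2)
      · subst h1; exact Or.inr h2
      · subst h2; exact Or.inr h1
      · exact Or.inr ⟨h1.1, h2.2⟩⟩

/-- `Π^(k)_m`: partitions of `{1,…,m}` all of whose blocks have size ≡ 1 (mod k). -/
def Pik (k m : ℕ) : Set (Setoid (Fin m)) :=
  {s | ∀ c ∈ s.classes, c.ncard ≡ 1 [MOD k]}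

/-- `I`: partitions with exactly one non-singleton block (the minimal building set of `Π_m`). -/
def BSI (m : ℕ) : Set (Setoid (Fin m)) :=
  {s | ∃ B : Set (Fin m), 2 ≤ B.ncard ∧ s = blockSetoid B}

/-- `G`: partitions with exactly one non-singleton block, of size ≡ 1 (mod k). -/
def BSG (k m : ℕ) : Set (Setoid (Fin m)) :=
  {s | ∃ B : Set (Fin m), 2 ≤ B.ncard ∧ B.ncard ≡ 1 [MOD k] ∧ s = blockSetoid B}

/-- `z` is a minimal upper bound of the set `A` within the subposet `P`. -/
def IsMinUB {L : Type*} [PartialOrder L] (P : Set L) (A : Set L) (z : L) : Prop :=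
  z ∈ P ∧ (∀ a ∈ A, a ≤ z) ∧ ∀ w ∈ P, (∀ a ∈ A, a ≤ w) → w ≤ z → w = z

/-- Maximal elements of `S` lying below `x`. -/
def maxBelow {L : Type*} [PartialOrder L] (S : Set L) (x : L) : Set L :=
  {g ∈ S | g ≤ x ∧ ∀ g' ∈ S, g' ≤ x → g ≤ g' → g = g'}

/-- The support of a partition: union of its non-singleton blocks. -/
def suppPart {m : ℕ} (s : Setoid (Fin m)) : Set (Fin m) :=
  {x | ∃ y, x ≠ y ∧ s x y}

/-- Membership in the family of faces of the complex of k-trees: `N ⊆ G` and every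
antichain in `N` of size at least two has a unique minimal upper bound in `Pik k m`,
which moreover does not lie in `G`. -/
def memN (k m : ℕ) (N : Set (Setoid (Fin m))) : Prop :=
  N ⊆ BSG k m ∧ ∀ S : Finset (Setoid (Fin m)), ↑S ⊆ N → 2 ≤ S.card →
    (∀ a ∈ S, ∀ b ∈ S, a ≠ b → ¬ a ≤ b) →
    (∃! z, IsMinUB (Pik k m) ↑S z) ∧
      ∀ z, IsMinUB (Pik k m) ↑S z → z ∉ BSG k m

/-- `Σ(N)`: the set of all (unique minimal-upper-bound) joins of subsets of `N` inside
`Pik k m`; the empty join yields the minimal element. -/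
def SigmaSet (k m : ℕ) (N : Set (Setoid (Fin m))) : Set (Setoid (Fin m)) :=
  {a | ∃ X ⊆ N, IsMinUB (Pik k m) X a}

/-!
Every element of `N` is a single block `blockSetoid B` of size `≡ 1 (mod k)`. If two incomparable
elements of `N` had overlapping blocks, the block through a common point of any minimal upper
bound `z` of the pair would itself be a single-block upper bound below `z`; minimality then makes
`z` equal to it, so `z ∈ G`, which `memN` forbids. Hence the maximal elements of `N` below `a`
have pairwise disjoint blocks, so their join in `Π_m` has exactly these blocks plus singletons and
lies in `Π^(k)_m`. It lies below `a` and above every element of `N` below `a`, in particular above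
the subset `X` of `N` whose minimal upper bound is `a`; minimality of `a` gives equality.
-/

instance {α : Type*} [Finite α] : Finite (Setoid α) :=
  Finite.of_injective (fun s : Setoid α => s.r) fun _ _ h =>
    Setoid.ext fun a b => iff_of_eq (congrFun (congrFun h a) b)

section Partitions

variable {k m : ℕ}

theorem blockSetoid_le {B : Set (Fin m)} {s : Setoid (Fin m)}
    (h : ∀ x ∈ B, ∀ y ∈ B, s x y) : blockSetoid B ≤ s := by
  rintro x y (rfl | ⟨hx, hy⟩)
  · exact s.refl x
  · exact h x hx y hy

theorem blockSetoid_mono {B B' : Set (Fin m)} (h : B ⊆ B') :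
    blockSetoid B ≤ blockSetoid B' :=
  blockSetoid_le fun _ hx _ hy => Or.inr ⟨h hx, h hy⟩

theorem mem_suppPart_of_rel {s : Setoid (Fin m)} {x y : Fin m} (h : s x y) (hxy : x ≠ y) :
    x ∈ suppPart s :=
  ⟨y, hxy, h⟩

theorem suppPart_blockSetoid {B : Set (Fin m)} (hB : 2 ≤ B.ncard) :
    suppPart (blockSetoid B) = B := by
  ext x
  constructor
  · rintro ⟨y, hxy, rfl | ⟨hx, -⟩⟩
    · exact absurd rfl hxy
    · exact hx
  · intro hx
    obtain ⟨y, hy, hyx⟩ := exists_ne_of_one_lt_ncard (s := B) hB x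
    exact ⟨y, hyx.symm, Or.inr ⟨hx, hy⟩⟩

theorem blockSetoid_mem_Pik {B : Set (Fin m)} (hB : B.ncard ≡ 1 [MOD k]) :
    blockSetoid B ∈ Pik k m := by
  rintro c ⟨y, rfl⟩
  by_cases hy : y ∈ B
  · have hc : {x | blockSetoid B x y} = B := by
      ext x
      exact ⟨by rintro (rfl | ⟨hx, -⟩) <;> assumption, fun hx => Or.inr ⟨hx, hy⟩⟩
    rwa [hc]
  · have hc : {x | blockSetoid B x y} = {y} := by
      ext x
      exact ⟨by rintro (rfl | ⟨-, h⟩); exacts [rfl, absurd h hy], fun hx => Or.inl hx⟩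
    rw [hc, ncard_singleton]

theorem mem_BSG_iff {g : Setoid (Fin m)} :
    g ∈ BSG k m ↔ 2 ≤ (suppPart g).ncard ∧ (suppPart g).ncard ≡ 1 [MOD k] ∧
      g = blockSetoid (suppPart g) := by
  constructor
  · rintro ⟨B, hB2, hBk, rfl⟩
    rw [suppPart_blockSetoid hB2]
    exact ⟨hB2, hBk, rfl⟩
  · exact fun ⟨h2, hk, hg⟩ => ⟨_, h2, hk, hg⟩

theorem rel_of_mem_suppPart {g : Setoid (Fin m)} (hg : g ∈ BSG k m) {x y : Fin m}
    (hx : x ∈ suppPart g) (hy : y ∈ suppPart g) : g x y := by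
  rw [(mem_BSG_iff.1 hg).2.2]
  exact Or.inr ⟨hx, hy⟩

theorem sSup_rel_iff_of_pairwiseDisjoint {M : Set (Setoid (Fin m))}
    (hM : M.PairwiseDisjoint suppPart) {x y : Fin m} :
    sSup M x y ↔ x = y ∨ ∃ g ∈ M, g x y := by
  let s : Setoid (Fin m) :=
    { r := fun x y => x = y ∨ ∃ g ∈ M, g x y
      iseqv := by
        refine ⟨fun x => Or.inl rfl, ?_, ?_⟩
        · rintro x y (rfl | ⟨g, hg, h⟩)
          exacts [Or.inl rfl, Or.inr ⟨g, hg, g.symm h⟩]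
        · rintro x y z (rfl | ⟨g, hg, hxy⟩) (rfl | ⟨g', hg', hyz⟩)
          · exact Or.inl rfl
          · exact Or.inr ⟨g', hg', hyz⟩
          · exact Or.inr ⟨g, hg, hxy⟩
          · by_cases hxy' : x = y
            · exact hxy' ▸ Or.inr ⟨g', hg', hyz⟩
            by_cases hyz' : y = z
            · exact hyz' ▸ Or.inr ⟨g, hg, hxy⟩
            obtain rfl : g = g' := hM.elim_set hg hg' y
              (mem_suppPart_of_rel (g.symm hxy) (Ne.symm hxy')) (mem_suppPart_of_rel hyz hyz')
            exact Or.inr ⟨g, hg, g.trans hxy hyz⟩ }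
  have hs : sSup M = s := by
    refine le_antisymm (sSup_le fun g hg _ _ h => Or.inr ⟨g, hg, h⟩) ?_
    rintro x y (rfl | ⟨g, hg, h⟩)
    exacts [(sSup M).refl x, le_sSup hg h]
  rw [hs]
  rfl

theorem sSup_mem_Pik {M : Set (Setoid (Fin m))} (hMG : M ⊆ BSG k m)
    (hM : M.PairwiseDisjoint suppPart) : sSup M ∈ Pik k m := by
  rintro c ⟨y, rfl⟩
  by_cases hy : ∃ g ∈ M, y ∈ suppPart g
  · obtain ⟨g, hg, hyg⟩ := hy
    have hc : {x | sSup M x y} = suppPart g := by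
      ext x
      rw [mem_ofPred_eq, sSup_rel_iff_of_pairwiseDisjoint hM]
      constructor
      · rintro (rfl | ⟨g', hg', hxy⟩)
        · exact hyg
        by_cases hxy' : x = y
        · exact hxy' ▸ hyg
        obtain rfl : g' = g :=
          hM.elim_set hg' hg y (mem_suppPart_of_rel (g'.symm hxy) (Ne.symm hxy')) hyg
        exact mem_suppPart_of_rel hxy hxy'
      · exact fun hx => Or.inr ⟨g, hg, rel_of_mem_suppPart (hMG hg) hx hyg⟩
    rw [hc]
    exact (mem_BSG_iff.1 (hMG hg)).2.1
  · have hc : {x | sSup M x y} = {y} := by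
      ext x
      rw [mem_ofPred_eq, sSup_rel_iff_of_pairwiseDisjoint hM, mem_singleton_iff]
      refine ⟨?_, Or.inl⟩
      rintro (h | ⟨g, hg, hxy⟩)
      · exact h
      by_contra hxy'
      exact hy ⟨g, hg, mem_suppPart_of_rel (g.symm hxy) (Ne.symm hxy')⟩
    rw [hc, ncard_singleton]

theorem memN.exists_minUB_pair {N : Set (Setoid (Fin m))} (hN : memN k m N)
    {g g' : Setoid (Fin m)} (hg : g ∈ N) (hg' : g' ∈ N) (h : ¬ g ≤ g') (h' : ¬ g' ≤ g) :
    ∃ z, IsMinUB (Pik k m) {g, g'} z ∧ z ∉ BSG k m := by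
  have hne : g ≠ g' := fun e => h e.le
  obtain ⟨⟨z, hz, -⟩, hzG⟩ := hN.2 {g, g'}
    (by rw [Finset.coe_pair]; exact insert_subset hg (singleton_subset_iff.2 hg'))
    (Finset.card_pair hne).ge (by
      simp only [Finset.mem_insert, Finset.mem_singleton]
      rintro a (rfl | rfl) b (rfl | rfl) hab <;> first | exact absurd rfl hab | assumption)
  exact ⟨z, by rwa [Finset.coe_pair] at hz, hzG z hz⟩

theorem disjoint_suppPart_of_memN {N : Set (Setoid (Fin m))} (hN : memN k m N)
    {g g' : Setoid (Fin m)} (hg : g ∈ N) (hg' : g' ∈ N) (h : ¬ g ≤ g') (h' : ¬ g' ≤ g) :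
    Disjoint (suppPart g) (suppPart g') := by
  rw [Set.disjoint_left]
  intro p hp hp'
  obtain ⟨z, ⟨hzP, hzub, hzmin⟩, hzG⟩ := hN.exists_minUB_pair hg hg' h h'
  set D := {x | z x p}
  have hDk : D.ncard ≡ 1 [MOD k] := hzP D ⟨p, rfl⟩
  have hpair : ∀ f ∈ ({g, g'} : Set (Setoid (Fin m))), f ∈ BSG k m ∧ p ∈ suppPart f := by
    rintro f (rfl | rfl)
    exacts [⟨hN.1 hg, hp⟩, ⟨hN.1 hg', hp'⟩]
  have hsub : ∀ f ∈ ({g, g'} : Set (Setoid (Fin m))), suppPart f ⊆ D := fun f hf _ hx =>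
    hzub f hf (rel_of_mem_suppPart (hpair f hf).1 hx (hpair f hf).2)
  have hub : ∀ f ∈ ({g, g'} : Set (Setoid (Fin m))), f ≤ blockSetoid D := by
    intro f hf
    rw [(mem_BSG_iff.1 (hpair f hf).1).2.2]
    exact blockSetoid_mono (hsub f hf)
  have hz : blockSetoid D = z :=
    hzmin _ (blockSetoid_mem_Pik hDk) hub (blockSetoid_le fun x hx y hy => z.trans hx (z.symm hy))
  have hD2 : 2 ≤ D.ncard := (mem_BSG_iff.1 (hN.1 hg)).1.trans
    (ncard_le_ncard (hsub g (mem_insert g _)) (toFinite D))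
  exact hzG ⟨D, hD2, hDk, hz.symm⟩

end Partitions

section MaxBelow

variable {L : Type*} [PartialOrder L]

theorem isAntichain_maxBelow (S : Set L) (x : L) : IsAntichain (· ≤ ·) (maxBelow S x) :=
  fun _ hg g' hg' hne hle => hne (hg.2.2 g' hg'.1 hg'.2.1 hle)

theorem exists_mem_maxBelow_ge {S : Set L} (hS : S.Finite) {g x : L} (hg : g ∈ S)
    (hgx : g ≤ x) : ∃ g' ∈ maxBelow S x, g ≤ g' := by
  obtain ⟨g', hgg', hmax⟩ :=
    (hS.subset (sep_subset S (· ≤ x))).exists_le_maximal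
      (show g ∈ {f ∈ S | f ≤ x} from ⟨hg, hgx⟩)
  exact ⟨g', ⟨hmax.prop.1, hmax.prop.2,
    fun f hf hfx hle => le_antisymm hle (hmax.2 ⟨hf, hfx⟩ hle)⟩, hgg'⟩

end MaxBelow

theorem pairwiseDisjoint_suppPart_maxBelow {k m : ℕ} {N : Set (Setoid (Fin m))}
    (hN : memN k m N) (a : Setoid (Fin m)) : (maxBelow N a).PairwiseDisjoint suppPart :=
  fun _ hg _ hg' hne => disjoint_suppPart_of_memN hN hg.1 hg'.1
    (isAntichain_maxBelow N a hg hg' hne) (isAntichain_maxBelow N a hg' hg hne.symm)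

theorem stmt7_general (k m : ℕ) (N : Set (Setoid (Fin m))) (hN : memN k m N)
    (a : Setoid (Fin m)) (ha : a ∈ SigmaSet k m N) :
    a = sSup (maxBelow N a) := by
  obtain ⟨X, hXN, -, hXa, hmin⟩ := ha
  have hX : ∀ x ∈ X, x ≤ sSup (maxBelow N a) := fun x hx => by
    obtain ⟨g, hg, hxg⟩ := exists_mem_maxBelow_ge (toFinite N) (hXN hx) (hXa x hx)
    exact hxg.trans (le_sSup hg)
  exact (hmin _ (sSup_mem_Pik (fun g hg => hN.1 hg.1) (pairwiseDisjoint_suppPart_maxBelow hN a))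
    hX (sSup_le fun g hg => hg.2.1)).symm

/-- For `N` a face of the complex of k-trees and `a ∈ Σ(N)`, the element
`a` is the join, in the full partition lattice, of the maximal elements of `N` below `a`. -/
theorem stmt7 (k m : ℕ) (hk : 1 ≤ k) (N : Set (Setoid (Fin m))) (hN : memN k m N)
    (a : Setoid (Fin m)) (ha : a ∈ SigmaSet k m N) :
    a = sSup (maxBelow N a) :=
  stmt7_general k m N hN a ha
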